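/- Assume p is odd and e ≥ 1. Let A ⊆ V_R be an F_p-subspace of dimension d that is totally isotropic with respect to ω_R (i.e., ω_R(x,y) = 0 for all x,y ∈ A), with basis a_1,…,a_d over F_p. Set a := a_d, u(x) := x^p − a^{p−1}x, and let R_1 be the additive polynomial of degree p^{e−1} obtained from a as in the quotient step (so that x·R(x) = u(x)·R_1(u(x)) + Δ_0(x)^p − Δ_0(x)). Then A' := Σ_{i=1}^{d−1} F_p·u(a_i) ⊆ V_{R_1} is an F_p-subspace of dimension d−1 that is totally isotropic with respect to ω_{R_1}. -/

import Mathlib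

/-!
Polarizing `x R(x) = u(x) R₁(u(x)) + Δ₀(x)^p - Δ₀(x)` gives
`x R(y) + y R(x) = u(x) R₁(u(y)) + u(y) R₁(u(x)) + B(x,y)^p - B(x,y)` with `B` the polar form
of `Δ₀`. Together with `f_S(x,y)^p - f_S(x,y) = x S(y) + y S(x) - x^{p^m} E_S(y)` for `S` of
degree `p^m` (applied to `R` and `R₁`) this shows that, for `γ ∈ A`, the polynomial function
`F(x) = f_R(x,γ) - B(x,γ) - f_{R₁}(u(x),u(γ))` satisfies `F^p - F = E_{R₁}(u(γ)) u(x)^{p^{e-1}}`.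
Isotropy of `A` makes `F` vanish on `ker u = F_p·a`. If `E_{R₁}(u(γ)) ≠ 0`, then `F` omits the
value `1` (`F(x) = 1` forces `u(x) = 0`); otherwise `F^p = F` and `F` omits every value outside
`F_p`. A polynomial function on an algebraically closed field that omits a value is constant, so
`E_{R₁}(u(γ)) = 0` and `F = 0`, i.e. `f_{R₁}(u(x),u(γ)) = f_R(x,γ) - B(x,γ)`, which is symmetric
on `A`. Since `ker u = F_p·a_d`, `u` is injective on the span of `a_1,…,a_{d-1}`.
-/

open Finset Polynomial

/-- The additive polynomial `R(x) = ∑_{i=0}^e a_i x^{p^i}`, evaluated in any commutative ring. -/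
def Rgen {A : Type*} [CommRing A] (p e : ℕ) (a : ℕ → A) (x : A) : A :=
  ∑ i ∈ Finset.range (e + 1), a i * x ^ p ^ i

/-- `E_R(x) = R(x)^{p^e} + ∑_{i=0}^e (a_i x)^{p^{e-i}}`. -/
def Egen {A : Type*} [CommRing A] (p e : ℕ) (a : ℕ → A) (x : A) : A :=
  Rgen p e a x ^ p ^ e + ∑ i ∈ Finset.range (e + 1), (a i * x) ^ p ^ (e - i)

/-- `f_R(x,y) = -∑_{i=0}^{e-1} ( ∑_{j=0}^{e-i-1} (a_i x^{p^i} y)^{p^j} + (x R(y))^{p^i} )`. -/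
def fgen {A : Type*} [CommRing A] (p e : ℕ) (a : ℕ → A) (x y : A) : A :=
  -∑ i ∈ Finset.range e,
    ((∑ j ∈ Finset.range (e - i), (a i * x ^ p ^ i * y) ^ p ^ j) + (x * Rgen p e a y) ^ p ^ i)

/-- The set `H_R = {(a,b) : E_R(a) = 0, b^p - b = a R(a)}`. -/
def Hset {K : Type*} [CommRing K] (p e : ℕ) (a : ℕ → K) : Set (K × K) :=
  {h | Egen p e a h.1 = 0 ∧ h.2 ^ p - h.2 = h.1 * Rgen p e a h.1}

/-- The group law `(a,b)·(a',b') = (a+a', b+b'+f_R(a,a'))` on `H_R`. -/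
def Hmul {K : Type*} [CommRing K] (p e : ℕ) (a : ℕ → K) (h h' : K × K) : K × K :=
  (h.1 + h'.1, h.2 + h'.2 + fgen p e a h.1 h'.1)

theorem pow_pow_eq_self {M : Type*} [Monoid M] {q : ℕ} {μ : M} (hμ : μ ^ q = μ) (k : ℕ) :
    μ ^ q ^ k = μ := by
  induction k with
  | zero => simp
  | succ k ih => rw [pow_succ, pow_mul, ih, hμ]

theorem pow_pow_pow_succ {M : Type*} [Monoid M] (t : M) (q j : ℕ) :
    (t ^ q ^ j) ^ q = t ^ q ^ (j + 1) := by
  rw [← pow_mul, ← pow_succ]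

section CommRing

variable {A B : Type*} [CommRing A] [CommRing B]

theorem fgen_mul_left {q : ℕ} {μ : A} (hμ : μ ^ q = μ) (m : ℕ) (s : ℕ → A) (x y : A) :
    fgen q m s (μ * x) y = μ * fgen q m s x y := by
  simp only [fgen, mul_pow, pow_pow_eq_self hμ, mul_neg, Finset.mul_sum, mul_add]
  simp only [mul_comm, mul_left_comm, mul_assoc]

theorem map_Rgen (f : A →+* B) (q m : ℕ) (s : ℕ → A) (x : A) :
    f (Rgen q m s x) = Rgen q m (fun i => f (s i)) (f x) := by
  simp [Rgen]

theorem map_fgen (f : A →+* B) (q m : ℕ) (s : ℕ → A) (x y : A) :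
    f (fgen q m s x y) = fgen q m (fun i => f (s i)) (f x) (f y) := by
  simp [fgen, map_Rgen]

end CommRing

theorem eval_fgen {K : Type*} [CommRing K] (q m : ℕ) (s : ℕ → K) (P Q : K[X]) (x : K) :
    (fgen q m (fun i => C (s i)) P Q).eval x = fgen q m s (P.eval x) (Q.eval x) := by
  simpa using map_fgen (evalRingHom x) q m (fun i => C (s i)) P Q

theorem eval_Rgen {K : Type*} [CommRing K] (q m : ℕ) (s : ℕ → K) (P : K[X]) (x : K) :
    (Rgen q m (fun i => C (s i)) P).eval x = Rgen q m s (P.eval x) := by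
  simpa using map_Rgen (evalRingHom x) q m (fun i => C (s i)) P

section Frobenius

variable {K : Type*} [CommRing K] {p₀ : ℕ} [ExpChar K p₀] {n : ℕ}

theorem add_pow_pow_pow (x y : K) (k : ℕ) :
    (x + y) ^ (p₀ ^ n) ^ k = x ^ (p₀ ^ n) ^ k + y ^ (p₀ ^ n) ^ k := by
  rw [← pow_mul]
  exact add_pow_expChar_pow ..

theorem Rgen_add (m : ℕ) (s : ℕ → K) (x y : K) :
    Rgen (p₀ ^ n) m s (x + y) = Rgen (p₀ ^ n) m s x + Rgen (p₀ ^ n) m s y := by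
  simp only [Rgen, add_pow_pow_pow, mul_add, Finset.sum_add_distrib]

theorem fgen_add_left (m : ℕ) (s : ℕ → K) (x x' y : K) :
    fgen (p₀ ^ n) m s (x + x') y = fgen (p₀ ^ n) m s x y + fgen (p₀ ^ n) m s x' y := by
  simp only [fgen, add_pow_pow_pow, mul_add, add_mul, Finset.sum_add_distrib]
  ring

theorem fgen_zero_left (m : ℕ) (s : ℕ → K) (y : K) : fgen (p₀ ^ n) m s 0 y = 0 := by
  simpa using fgen_add_left m s 0 0 y

theorem fgen_pow_sub_self (m : ℕ) (s : ℕ → K) (x y : K) :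
    fgen (p₀ ^ n) m s x y ^ p₀ ^ n - fgen (p₀ ^ n) m s x y =
      x * Rgen (p₀ ^ n) m s y + y * Rgen (p₀ ^ n) m s x -
        x ^ (p₀ ^ n) ^ m * Egen (p₀ ^ n) m s y := by
  set w : ℕ → K := fun i => s i * x ^ (p₀ ^ n) ^ i * y
  set z := x * Rgen (p₀ ^ n) m s y
  have telescope (t : K) (k : ℕ) :
      ∑ j ∈ range k, (t ^ (p₀ ^ n) ^ (j + 1) - t ^ (p₀ ^ n) ^ j) = t ^ (p₀ ^ n) ^ k - t := by
    simpa using Finset.sum_range_sub (fun j => t ^ (p₀ ^ n) ^ j) k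
  have hfrob : fgen (p₀ ^ n) m s x y ^ p₀ ^ n = -∑ i ∈ range m,
      (∑ j ∈ range (m - i), w i ^ (p₀ ^ n) ^ (j + 1) + z ^ (p₀ ^ n) ^ (i + 1)) := by
    rw [fgen, ← iterateFrobenius_def, map_neg, map_sum]
    simp only [map_add, map_sum, iterateFrobenius_def, pow_pow_pow_succ]
    rfl
  have hyR : y * Rgen (p₀ ^ n) m s x = ∑ i ∈ range (m + 1), w i := by
    simp only [Rgen, Finset.mul_sum, w]
    exact Finset.sum_congr rfl fun i _ => by ring
  have hxE : x ^ (p₀ ^ n) ^ m * Egen (p₀ ^ n) m s y =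
      z ^ (p₀ ^ n) ^ m + ∑ i ∈ range (m + 1), w i ^ (p₀ ^ n) ^ (m - i) := by
    simp only [Egen, mul_add, mul_pow, Finset.mul_sum, z, w]
    refine congrArg₂ _ (by ring) (Finset.sum_congr rfl fun i hi => ?_)
    have hx : (x ^ (p₀ ^ n) ^ i) ^ (p₀ ^ n) ^ (m - i) = x ^ (p₀ ^ n) ^ m := by
      rw [← pow_mul, ← pow_add, Nat.add_sub_cancel' (Nat.lt_succ_iff.mp (Finset.mem_range.mp hi))]
    rw [hx]
    ring
  calc fgen (p₀ ^ n) m s x y ^ p₀ ^ n - fgen (p₀ ^ n) m s x y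
      = -∑ i ∈ range m, (∑ j ∈ range (m - i), (w i ^ (p₀ ^ n) ^ (j + 1) - w i ^ (p₀ ^ n) ^ j) +
          (z ^ (p₀ ^ n) ^ (i + 1) - z ^ (p₀ ^ n) ^ i)) := by
        rw [hfrob, fgen, neg_sub_neg, ← Finset.sum_sub_distrib, ← Finset.sum_neg_distrib]
        refine Finset.sum_congr rfl fun i _ => ?_
        rw [Finset.sum_sub_distrib]
        ring
    _ = -∑ i ∈ range m, (w i ^ (p₀ ^ n) ^ (m - i) - w i) - (z ^ (p₀ ^ n) ^ m - z) := by
        simp only [telescope, Finset.sum_add_distrib]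
        ring
    _ = _ := by
        rw [hyR, hxE, Finset.sum_range_succ, Finset.sum_range_succ, Finset.sum_sub_distrib]
        simp only [Nat.sub_self, pow_zero, pow_one]
        ring

end Frobenius

section AlgClosed

variable {K : Type*} [Field K] [IsAlgClosed K]

theorem IsAlgClosed.exists_pow_sub_self_eq_one {p : ℕ} (hp : 1 < p) : ∃ c : K, c ^ p - c = 1 := by
  have hlt : (X + C 1 : K[X]).degree < (X ^ p : K[X]).degree := by
    rw [degree_X_add_C, degree_X_pow]
    exact_mod_cast hp
  obtain ⟨c, hc⟩ := IsAlgClosed.exists_root (X ^ p - (X + C 1) : K[X]) (by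
    rw [degree_sub_eq_left_of_degree_lt hlt, degree_X_pow]
    exact_mod_cast (by omega : p ≠ 0))
  exact ⟨c, by simpa [sub_eq_zero, sub_eq_iff_eq_add'] using hc⟩

theorem IsAlgClosed.eq_zero_of_forall_ne {F : K → K} (hF : ∃ P : K[X], ∀ x, P.eval x = F x)
    (hF0 : F 0 = 0) {c : K} (hc : ∀ x, F x ≠ c) (x : K) : F x = 0 := by
  obtain ⟨P, hP⟩ := hF
  by_cases hdeg : P.degree ≤ 0
  · rw [← hF0, ← hP, ← hP, eq_C_of_degree_le_zero hdeg, eval_C, eval_C]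
  · obtain ⟨y, hy⟩ := IsAlgClosed.exists_root (P - C c) (by
      rw [degree_sub_C (not_le.mp hdeg)]
      exact (not_le.mp hdeg).ne')
    exact absurd (by simpa [sub_eq_zero, hP] using hy) (hc y)

theorem IsAlgClosed.eq_zero_of_pow_sub_self_eq_mul {p : ℕ} (hp : 1 < p) {F w : K → K} {D : K}
    (hF : ∃ P : K[X], ∀ x, P.eval x = F x) (hF0 : F 0 = 0) (hker : ∀ x, w x = 0 → F x = 0)
    (hw : ∃ x, w x ≠ 0) (h : ∀ x, F x ^ p - F x = D * w x) : D = 0 ∧ ∀ x, F x = 0 := by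
  have hD : D = 0 := by
    by_contra hD
    have hF1 : ∀ x, F x ≠ 1 := fun x hx => by
      have hwx : w x = 0 := by simpa [hx, hD] using (h x).symm
      simp [hker x hwx] at hx
    obtain ⟨x, hx⟩ := hw
    have := h x
    rw [eq_zero_of_forall_ne hF hF0 hF1 x, zero_pow (by omega), sub_zero] at this
    exact mul_ne_zero hD hx this.symm
  obtain ⟨c, hc⟩ := exists_pow_sub_self_eq_one (K := K) hp
  refine ⟨hD, eq_zero_of_forall_ne hF hF0 (c := c) fun x hx => ?_⟩
  have := h x
  rw [hx, hc, hD, zero_mul] at this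
  exact one_ne_zero this

end AlgClosed

theorem FiniteField.mem_range_algebraMap_of_pow_card_eq_self {k K : Type*} [Field k] [Fintype k]
    [Field K] [Algebra k K] {μ : K} (hμ : μ ^ Fintype.card k = μ) :
    μ ∈ Set.range (algebraMap k K) := by
  have hroots := roots_map_of_injective_of_card_eq_natDegree (algebraMap k K).injective
    (p := X ^ Fintype.card k - X) (by
      rw [FiniteField.roots_X_pow_card_sub_X,
        FiniteField.X_pow_card_sub_X_natDegree_eq _ Fintype.one_lt_card]
      simp)
  have hne : (X ^ Fintype.card k - X : K[X]) ≠ 0 :=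
    FiniteField.X_pow_card_sub_X_ne_zero K Fintype.one_lt_card
  have hmem : μ ∈ (map (algebraMap k K) (X ^ Fintype.card k - X)).roots := by
    simp [hne, hμ]
  rw [← hroots] at hmem
  obtain ⟨ν, -, rfl⟩ := Multiset.mem_map.mp hmem
  exact ⟨ν, rfl⟩

theorem LinearIndependent.map_castLE_of_ker_le {R M M' : Type*} [Ring R] [AddCommGroup M]
    [Module R M] [AddCommGroup M'] [Module R M'] {d : ℕ} {v : Fin d → M}
    (hv : LinearIndependent R v) (f : M →ₗ[R] M') (hd : d - 1 < d)
    (hker : LinearMap.ker f ≤ Submodule.span R {v ⟨d - 1, hd⟩}) :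
    LinearIndependent R (fun i : Fin (d - 1) => f (v (Fin.castLE (by omega) i))) := by
  refine (hv.comp _ (Fin.castLE_injective _)).map (f := f) ?_
  have hdisj := hv.disjoint_span_image (s := Set.range (Fin.castLE (by omega : d - 1 ≤ d)))
    (t := {⟨d - 1, hd⟩}) (by
      rw [Set.disjoint_singleton_right]
      rintro ⟨i, hi⟩
      have := congrArg Fin.val hi
      simp only [Fin.val_castLE] at this
      omega)
  rw [← Set.range_comp, Set.image_singleton] at hdisj
  exact hdisj.mono_right hker

theorem LinearMap.exists_mem_span_eq_of_mem_span_range {R M M' ι : Type*} [Semiring R]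
    [AddCommMonoid M] [Module R M] [AddCommMonoid M'] [Module R M'] (f : M →ₗ[R] M')
    (w : ι → M) {x : M'} (hx : x ∈ Submodule.span R (Set.range fun i => f (w i))) :
    ∃ β ∈ Submodule.span R (Set.range w), f β = x := by
  rw [Set.range_comp', Submodule.span_image] at hx
  exact Submodule.mem_map.mp hx

section QuotientStep

variable {K : Type*} [Field K]

-- The maps `u` and `Δ₀` of the quotient step by `α`, and the polar form of `Δ₀` (`quotDelta_add`).
def quotMap (q : ℕ) (α x : K) : K := x ^ q - α ^ (q - 1) * x

def quotDelta (q e : ℕ) (a : ℕ → K) (α x : K) : K :=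
  -(α⁻¹ * x) * (fgen q e a α α / 2 / α * x - fgen q e a x α)

def quotPolar (q e : ℕ) (a : ℕ → K) (α x y : K) : K :=
  -α⁻¹ * (fgen q e a α α / α * x * y - x * fgen q e a y α - y * fgen q e a x α)

theorem quotPolar_comm (q e : ℕ) (a : ℕ → K) (α x y : K) :
    quotPolar q e a α x y = quotPolar q e a α y x := by
  unfold quotPolar
  ring

theorem quotPolar_self_left {α : K} (hα : α ≠ 0) (q e : ℕ) (a : ℕ → K) (y : K) :
    quotPolar q e a α α y = fgen q e a y α := by
  unfold quotPolar
  field_simp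
  ring

theorem quotPolar_mul_left {q : ℕ} {μ : K} (hμ : μ ^ q = μ) (e : ℕ) (a : ℕ → K) (α x y : K) :
    quotPolar q e a α (μ * x) y = μ * quotPolar q e a α x y := by
  rw [quotPolar, quotPolar, fgen_mul_left hμ]
  ring

theorem quotMap_zero {q : ℕ} (hq : q ≠ 0) (α : K) : quotMap q α 0 = 0 := by
  rw [quotMap, zero_pow hq, mul_zero, sub_zero]

theorem quotMap_mul_right {q : ℕ} (hq : q ≠ 0) (α t : K) :
    quotMap q α (t * α) = (t ^ q - t) * α ^ q := by
  rw [quotMap, ← Nat.sub_add_cancel (Nat.one_le_iff_ne_zero.mpr hq), pow_succ, Nat.add_sub_cancel]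
  ring

theorem exists_eq_mul_of_quotMap_eq_zero {q : ℕ} (hq : q ≠ 0) {α x : K} (hα : α ≠ 0)
    (hx : quotMap q α x = 0) : ∃ μ : K, μ ^ q = μ ∧ x = μ * α := by
  refine ⟨x / α, ?_, (div_mul_cancel₀ x hα).symm⟩
  have h := quotMap_mul_right hq α (x / α)
  rw [div_mul_cancel₀ x hα, hx, eq_comm, mul_eq_zero] at h
  exact sub_eq_zero.mp (h.resolve_right (pow_ne_zero _ hα))

variable {p₀ : ℕ} [ExpChar K p₀] {n : ℕ}

theorem quotMap_add (α x y : K) :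
    quotMap (p₀ ^ n) α (x + y) = quotMap (p₀ ^ n) α x + quotMap (p₀ ^ n) α y := by
  rw [quotMap, quotMap, quotMap, add_pow_expChar_pow]
  ring

theorem quotDelta_add (h2 : (2 : K) ≠ 0) (e : ℕ) (a : ℕ → K) (α x y : K) :
    quotDelta (p₀ ^ n) e a α (x + y) =
      quotDelta (p₀ ^ n) e a α x + quotDelta (p₀ ^ n) e a α y + quotPolar (p₀ ^ n) e a α x y := by
  rw [quotDelta, quotDelta, quotDelta, quotPolar, fgen_add_left]
  field_simp
  ring

def quotMapLinear (k : Type*) [Field k] [Fintype k] [Algebra k K]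
    (hcard : Fintype.card k = p₀ ^ n) (α : K) : K →ₗ[k] K where
  toFun := quotMap (p₀ ^ n) α
  map_add' := quotMap_add α
  map_smul' μ x := by
    simp only [quotMap, Algebra.smul_def, mul_pow, ← map_pow, ← hcard, FiniteField.pow_card,
      RingHom.id_apply]
    ring

theorem ker_quotMapLinear_le {k : Type*} [Field k] [Fintype k] [Algebra k K]
    (hcard : Fintype.card k = p₀ ^ n) {α : K} (hα : α ≠ 0) :
    LinearMap.ker (quotMapLinear k hcard α) ≤ Submodule.span k {α} := by
  intro z hz
  obtain ⟨μ, hμ, rfl⟩ :=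
    exists_eq_mul_of_quotMap_eq_zero (expChar_pow_pos K p₀ n).ne' hα (LinearMap.mem_ker.mp hz)
  obtain ⟨ν, rfl⟩ := FiniteField.mem_range_algebraMap_of_pow_card_eq_self (hcard ▸ hμ)
  exact Submodule.mem_span_singleton.mpr ⟨ν, Algebra.smul_def ν α⟩

end QuotientStep

section QuotientDefect

variable {K : Type*} [Field K] {p₀ n : ℕ} [ExpChar K p₀] {e : ℕ} {a c : ℕ → K} {α : K}

def IsQuotientStep (q e : ℕ) (a c : ℕ → K) (α : K) : Prop :=
  ∀ x, x * Rgen q e a x = quotMap q α x * Rgen q (e - 1) c (quotMap q α x) +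
    quotDelta q e a α x ^ q - quotDelta q e a α x

-- The function `F` of the proof sketch at the top.
def quotDefect (q e : ℕ) (a c : ℕ → K) (α γ x : K) : K :=
  fgen q e a x γ - quotPolar q e a α x γ - fgen q (e - 1) c (quotMap q α x) (quotMap q α γ)

theorem mul_Rgen_add_mul_Rgen_eq (hquot : IsQuotientStep (p₀ ^ n) e a c α) (h2 : (2 : K) ≠ 0)
    (x y : K) :
    x * Rgen (p₀ ^ n) e a y + y * Rgen (p₀ ^ n) e a x =
      quotMap (p₀ ^ n) α x * Rgen (p₀ ^ n) (e - 1) c (quotMap (p₀ ^ n) α y) +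
        quotMap (p₀ ^ n) α y * Rgen (p₀ ^ n) (e - 1) c (quotMap (p₀ ^ n) α x) +
        (quotPolar (p₀ ^ n) e a α x y ^ p₀ ^ n - quotPolar (p₀ ^ n) e a α x y) := by
  have hxy := hquot (x + y)
  rw [quotMap_add, Rgen_add, Rgen_add, quotDelta_add h2, add_pow_expChar_pow (p := p₀),
    add_pow_expChar_pow (p := p₀)] at hxy
  linear_combination hxy - hquot x - hquot y

theorem quotDefect_pow_sub_self (hquot : IsQuotientStep (p₀ ^ n) e a c α) (h2 : (2 : K) ≠ 0)
    {γ : K} (hγ : Egen (p₀ ^ n) e a γ = 0) (x : K) :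
    quotDefect (p₀ ^ n) e a c α γ x ^ p₀ ^ n - quotDefect (p₀ ^ n) e a c α γ x =
      Egen (p₀ ^ n) (e - 1) c (quotMap (p₀ ^ n) α γ) *
        quotMap (p₀ ^ n) α x ^ (p₀ ^ n) ^ (e - 1) := by
  simp only [quotDefect, sub_pow_expChar_pow]
  linear_combination fgen_pow_sub_self (p₀ := p₀) (n := n) e a x γ +
    mul_Rgen_add_mul_Rgen_eq hquot h2 x γ -
    fgen_pow_sub_self (p₀ := p₀) (n := n) (e - 1) c (quotMap _ α x) (quotMap _ α γ) -
    x ^ (p₀ ^ n) ^ e * hγ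

theorem exists_eval_eq_quotDefect (q e : ℕ) (a c : ℕ → K) (α γ : K) :
    ∃ P : K[X], ∀ x, P.eval x = quotDefect q e a c α γ x :=
  ⟨fgen q e (fun i => C (a i)) X (C γ) -
      C (-α⁻¹) * (C (fgen q e a α α / α * γ - fgen q e a γ α) * X -
        C γ * fgen q e (fun i => C (a i)) X (C α)) -
      fgen q (e - 1) (fun i => C (c i)) (X ^ q - C (α ^ (q - 1)) * X) (C (quotMap q α γ)),
    fun x => by
      simp only [eval_sub, eval_mul, eval_pow, eval_C, eval_X, eval_fgen, quotDefect, quotPolar,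
        quotMap]
      ring⟩

theorem quotDefect_eq_zero_of_quotMap_eq_zero (hα : α ≠ 0) {γ : K}
    (hαγ : fgen (p₀ ^ n) e a α γ = fgen (p₀ ^ n) e a γ α) {x : K}
    (hx : quotMap (p₀ ^ n) α x = 0) : quotDefect (p₀ ^ n) e a c α γ x = 0 := by
  obtain ⟨μ, hμ, rfl⟩ := exists_eq_mul_of_quotMap_eq_zero (expChar_pow_pos K p₀ n).ne' hα hx
  rw [quotDefect, hx, fgen_zero_left, fgen_mul_left hμ, quotPolar_mul_left hμ,
    quotPolar_self_left hα, hαγ, sub_self, sub_zero]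

theorem Egen_quotMap_eq_zero_and_fgen_quotMap [IsAlgClosed K] (hp : 1 < p₀ ^ n)
    (h2 : (2 : K) ≠ 0) (hα : α ≠ 0) (hquot : IsQuotientStep (p₀ ^ n) e a c α) {γ : K}
    (hγ : Egen (p₀ ^ n) e a γ = 0) (hαγ : fgen (p₀ ^ n) e a α γ = fgen (p₀ ^ n) e a γ α) :
    Egen (p₀ ^ n) (e - 1) c (quotMap (p₀ ^ n) α γ) = 0 ∧
      ∀ x, fgen (p₀ ^ n) (e - 1) c (quotMap (p₀ ^ n) α x) (quotMap (p₀ ^ n) α γ) =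
        fgen (p₀ ^ n) e a x γ - quotPolar (p₀ ^ n) e a α x γ := by
  have hq : p₀ ^ n ≠ 0 := by omega
  have hker (x : K) (hx : quotMap (p₀ ^ n) α x ^ (p₀ ^ n) ^ (e - 1) = 0) :
      quotDefect (p₀ ^ n) e a c α γ x = 0 :=
    quotDefect_eq_zero_of_quotMap_eq_zero hα hαγ (eq_zero_of_pow_eq_zero hx)
  obtain ⟨t, ht⟩ := IsAlgClosed.exists_pow_sub_self_eq_one (K := K) hp
  have hw : quotMap (p₀ ^ n) α (t * α) ^ (p₀ ^ n) ^ (e - 1) ≠ 0 := by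
    rw [quotMap_mul_right hq, ht, one_mul]
    exact pow_ne_zero _ (pow_ne_zero _ hα)
  obtain ⟨hD, hF⟩ := IsAlgClosed.eq_zero_of_pow_sub_self_eq_mul hp
    (exists_eval_eq_quotDefect _ e a c α γ)
    (quotDefect_eq_zero_of_quotMap_eq_zero hα hαγ (quotMap_zero hq α)) hker ⟨_, hw⟩
    (quotDefect_pow_sub_self hquot h2 hγ)
  exact ⟨hD, fun x => (sub_eq_zero.mp (hF x)).symm⟩

end QuotientDefect

/-- if `A ⊆ V_R` is a totally isotropic `F_p`-subspace of dimension `d` with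
basis `a_1,…,a_d`, `a := a_d`, and `R₁` is obtained from `a` by the quotient step, then
`A' := Σ_{i=1}^{d−1} F_p·u(a_i) ⊆ V_{R₁}` is a totally isotropic `F_p`-subspace of
dimension `d−1` with respect to `ω_{R₁}`. -/
theorem statement10 {Fp F K : Type*} [Field Fp] [Fintype Fp] [Field F]
    [Field K] [IsAlgClosed K] [Algebra F K] [Algebra Fp K]
    (p₀ n p e : ℕ) (hp₀ : p₀.Prime) (hodd : Odd p₀) [CharP F p₀]
    (hn : 0 < n) (hpn : p = p₀ ^ n)
    (hcardp : Fintype.card Fp = p)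
    (a : ℕ → F)
    -- `A ⊆ V_R` a totally isotropic `F_p`-subspace of dimension `d`, basis `a_1,…,a_d = v`
    (d : ℕ) (hd : 0 < d) (A : Submodule Fp K) (v : Fin d → K)
    (hindep : LinearIndependent Fp v) (hspan : Submodule.span Fp (Set.range v) = A)
    (hAV : ∀ x ∈ A, Egen p e (fun i => algebraMap F K (a i)) x = 0)
    (hiso : ∀ x ∈ A, ∀ y ∈ A, fgen p e (fun i => algebraMap F K (a i)) x y =
      fgen p e (fun i => algebraMap F K (a i)) y x)
    -- `a := a_d`
    (α : K) (hα : α = v ⟨d - 1, by omega⟩)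
    -- `R₁(z) = ∑_{i=0}^{e-1} c_i z^{p^i}`, the additive polynomial of the quotient step for `a`
    (c : ℕ → K)
    (hc : Polynomial.X * Rgen p e (fun i => Polynomial.C (algebraMap F K (a i))) Polynomial.X =
      (Polynomial.X ^ p - Polynomial.C (α ^ (p - 1)) * Polynomial.X) *
        Rgen p (e - 1) (fun i => Polynomial.C (c i))
          (Polynomial.X ^ p - Polynomial.C (α ^ (p - 1)) * Polynomial.X) +
      (-(Polynomial.C α⁻¹ * Polynomial.X) *
        (Polynomial.C (fgen p e (fun i => algebraMap F K (a i)) α α / 2 / α) * Polynomial.X -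
          fgen p e (fun i => Polynomial.C (algebraMap F K (a i))) Polynomial.X
            (Polynomial.C α))) ^ p -
      -(Polynomial.C α⁻¹ * Polynomial.X) *
        (Polynomial.C (fgen p e (fun i => algebraMap F K (a i)) α α / 2 / α) * Polynomial.X -
          fgen p e (fun i => Polynomial.C (algebraMap F K (a i))) Polynomial.X
            (Polynomial.C α))) :
    let u : K → K := fun x => x ^ p - α ^ (p - 1) * x
    let A' : Submodule Fp K :=
      Submodule.span Fp (Set.range fun i : Fin (d - 1) => u (v (Fin.castLE (by omega) i)))
    (∀ x ∈ A', Egen p (e - 1) c x = 0) ∧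
    Module.finrank Fp A' = d - 1 ∧
    (∀ x ∈ A', ∀ y ∈ A', fgen p (e - 1) c x y = fgen p (e - 1) c y x) := by
  intro u A'
  subst hpn hspan
  have : CharP K p₀ := charP_of_injective_algebraMap (algebraMap F K).injective p₀
  have : ExpChar K p₀ := .prime hp₀
  have h2 : (2 : K) ≠ 0 := Ring.two_ne_zero (ringChar.eq K p₀ ▸ hodd.ne_two_of_dvd_nat dvd_rfl)
  have hα0 : α ≠ 0 := hα ▸ hindep.ne_zero _
  have hαA : α ∈ Submodule.span Fp (Set.range v) := hα ▸ Submodule.subset_span ⟨_, rfl⟩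
  have hquot : IsQuotientStep (p₀ ^ n) e _ c α := fun x => by
    simpa only [eval_mul, eval_add, eval_sub, eval_pow, eval_neg, eval_X, eval_C, eval_Rgen,
      eval_fgen, quotMap, quotDelta] using congrArg (eval x) hc
  have key (γ : K) (hγ : γ ∈ Submodule.span Fp (Set.range v)) :=
    Egen_quotMap_eq_zero_and_fgen_quotMap (Nat.one_lt_pow hn.ne' hp₀.one_lt) h2 hα0 hquot
      (hAV γ hγ) (hiso α hαA γ hγ)
  have hmem (x : K) (hx : x ∈ A') : ∃ β ∈ Submodule.span Fp (Set.range v), u β = x := by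
    obtain ⟨β, hβ, rfl⟩ := LinearMap.exists_mem_span_eq_of_mem_span_range
      (quotMapLinear Fp hcardp α) (fun i => v (Fin.castLE (by omega) i)) hx
    exact ⟨β, Submodule.span_mono (Set.range_comp_subset_range _ v) hβ, rfl⟩
  refine ⟨fun x hx => ?_, ?_, fun x hx y hy => ?_⟩
  · obtain ⟨β, hβ, rfl⟩ := hmem x hx
    exact (key β hβ).1
  · exact (finrank_span_eq_card (hindep.map_castLE_of_ker_le (quotMapLinear Fp hcardp α)
      (by omega) (by rw [← hα]; exact ker_quotMapLinear_le hcardp hα0))).trans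
        (Fintype.card_fin _)
  · obtain ⟨β, hβ, rfl⟩ := hmem x hx
    obtain ⟨γ, hγ, rfl⟩ := hmem y hy
    refine ((key γ hγ).2 β).trans ?_
    rw [hiso β hβ γ hγ, quotPolar_comm]
    exact ((key β hβ).2 γ).symm
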